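/- Let x and v be positive definite n × n complex matrices with Tr x = Tr v = 1 and d_H(x, v) ≤ η for some real η ≥ 0. Then e^{−η}·v ≤ x ≤ e^{η}·v in the Loewner order, and consequently ‖x − v‖₁ ≤ e^{η} − 1. -/

import Mathlib

open Matrix Filter
open scoped ComplexOrder

noncomputable section

/-- The trace norm `‖A‖₁ = Tr √(AᴴA)` of a complex square matrix. -/
def traceNorm {m : Type*} [Fintype m] [DecidableEq m] (A : Matrix m m ℂ) : ℝ :=
  ((Matrix.posSemidef_conjTranspose_mul_self A).1.eigenvectorUnitary.1 *
    Matrix.diagonal (((↑) : ℝ → ℂ) ∘ (Real.sqrt ∘ (Matrix.posSemidef_conjTranspose_mul_self A).1.eigenvalues)) *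
    (star (Matrix.posSemidef_conjTranspose_mul_self A).1.eigenvectorUnitary : Matrix m m ℂ)).trace.re

/-- Spectral radius of a map on a complex vector space:
the supremum of the moduli of its eigenvalues. -/
def specRad {M : Type*} [Zero M] [SMul ℂ M] (T : M → M) : ℝ :=
  sSup {r : ℝ | ∃ (c : ℂ) (v : M), v ≠ 0 ∧ T v = c • v ∧ r = ‖c‖}

/-- A linear map on square matrices is positive if it maps positive semidefinite
matrices to positive semidefinite matrices. -/
def IsPosMap {m : Type*} [Fintype m] (T : Matrix m m ℂ →ₗ[ℂ] Matrix m m ℂ) : Prop :=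
  ∀ A : Matrix m m ℂ, A.PosSemidef → (T A).PosSemidef

/-- `sup(x/y) = inf {λ ≥ 0 : x ≤ λ y}` (in `[0,∞]`, with the Loewner order). -/
def supRatio {m : Type*} [Fintype m] (x y : Matrix m m ℂ) : ENNReal :=
  sInf {r : ENNReal | ∃ c : ℝ, 0 ≤ c ∧ r = ENNReal.ofReal c ∧ (c • y - x).PosSemidef}

/-- `inf(x/y) = sup {λ ≥ 0 : λ y ≤ x}` (in `[0,∞]`, with the Loewner order). -/
def infRatio {m : Type*} [Fintype m] (x y : Matrix m m ℂ) : ENNReal :=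
  sSup {r : ENNReal | ∃ c : ℝ, 0 ≤ c ∧ r = ENNReal.ofReal c ∧ (x - c • y).PosSemidef}

/-- The Hilbert projective metric `d_H(x,y) = log (sup(x/y) / inf(x/y)) ∈ [0,∞]`. -/
def dH {m : Type*} [Fintype m] (x y : Matrix m m ℂ) : EReal :=
  ENNReal.log (supRatio x y / infRatio x y)

/-- The projective diameter `Δ(T) = sup { d_H(T x, T y) : x, y PSD nonzero }`. -/
def DeltaT {m : Type*} [Fintype m] (T : Matrix m m ℂ →ₗ[ℂ] Matrix m m ℂ) : EReal :=
  sSup {e : EReal | ∃ x y : Matrix m m ℂ,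
    x.PosSemidef ∧ x ≠ 0 ∧ y.PosSemidef ∧ y ≠ 0 ∧ e = dH (T x) (T y)}

end

/-! Equal traces force `sup(x/v) ≥ 1 ≥ inf(x/v)`, so `sup(x/v) / inf(x/v) ≤ e^η` gives
`sup(x/v) ≤ e^η` and `inf(x/v) ≥ e^{-η}`; both extrema are attained because the cone of positive
semidefinite matrices is closed, which is the Loewner sandwich. With `B = (e^η - 1) v` the sandwich
reads `-B ≤ x - v ≤ B` (as `e^η + e^{-η} ≥ 2`), and in an eigenbasis of `x - v` this bounds each
`|λᵢ|` by a diagonal entry of `B`, so `‖x - v‖₁ = ∑ |λᵢ| ≤ Tr B = e^η - 1`. -/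

lemma ENNReal.le_and_inv_le_of_div_le {s t e : ENNReal} (he₀ : e ≠ 0) (he : e ≠ ⊤)
    (hs : 1 ≤ s) (ht : t ≤ 1) (h : s / t ≤ e) : s ≤ e ∧ e⁻¹ ≤ t := by
  have hst : s ≤ e * t := (ENNReal.div_le_iff_le_mul (.inr he) (.inr he₀)).mp h
  refine ⟨hst.trans (mul_le_of_le_one_right' ht), ?_⟩
  exact (ENNReal.inv_le_iff_le_mul (fun _ => he₀) (fun h => absurd h he)).mpr (hs.trans hst)

namespace Matrix

variable {n : Type*}

lemma isClosed_setOf_posSemidef [Fintype n] : IsClosed {M : Matrix n n ℂ | M.PosSemidef} := by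
  simp only [posSemidef_iff_dotProduct_mulVec, Set.ofPred_and, Set.ofPred_forall]
  refine (isClosed_eq (by fun_prop) continuous_id).inter
    (isClosed_iInter fun y => isClosed_le continuous_const ?_)
  fun_prop

variable {x v : Matrix n n ℂ}

lemma PosSemidef.smul_sub_of_le (hv : v.PosSemidef) {a b : ℝ} (hab : a ≤ b)
    (ha : (a • v - x).PosSemidef) : (b • v - x).PosSemidef := by
  rw [show b • v - x = (a • v - x) + (b - a) • v by module]
  exact ha.add (hv.smul (sub_nonneg.mpr hab))

lemma PosSemidef.sub_smul_of_le (hv : v.PosSemidef) {a b : ℝ} (hab : a ≤ b)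
    (hb : (x - b • v).PosSemidef) : (x - a • v).PosSemidef := by
  rw [show x - a • v = (x - b • v) + (b - a) • v by module]
  exact hb.add (hv.smul (sub_nonneg.mpr hab))

end Matrix

open Matrix

section HilbertMetric

variable {n : Type*} [Fintype n] {x v : Matrix n n ℂ}

lemma posSemidef_smul_sub_of_supRatio_le (hv : v.PosSemidef) {a : ℝ} (ha : 0 ≤ a)
    (h : supRatio x v ≤ ENNReal.ofReal a) : (a • v - x).PosSemidef := by
  suffices Set.Ioi a ⊆ {c : ℝ | (c • v - x).PosSemidef} from
    (isClosed_setOf_posSemidef.preimage (by fun_prop)).closure_subset_iff.mpr this (by simp)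
  intro c hc
  obtain ⟨_, ⟨c', -, rfl, hc'⟩, hlt⟩ := sInf_lt_iff.mp <|
    h.trans_lt ((ENNReal.ofReal_lt_ofReal_iff (ha.trans_lt hc)).mpr hc)
  exact hv.smul_sub_of_le (ENNReal.ofReal_lt_ofReal_iff'.mp hlt).1.le hc'

lemma posSemidef_sub_smul_of_le_infRatio (hv : v.PosSemidef) {a : ℝ} (ha : 0 < a)
    (h : ENNReal.ofReal a ≤ infRatio x v) : (x - a • v).PosSemidef := by
  suffices Set.Iio a ⊆ {c : ℝ | (x - c • v).PosSemidef} from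
    (isClosed_setOf_posSemidef.preimage (by fun_prop)).closure_subset_iff.mpr this (by simp)
  intro c hc
  obtain ⟨_, ⟨c', -, rfl, hc'⟩, hlt⟩ := lt_sSup_iff.mp <|
    ((ENNReal.ofReal_lt_ofReal_iff ha).mpr hc).trans_le h
  exact hv.sub_smul_of_le (ENNReal.ofReal_lt_ofReal_iff'.mp hlt).1.le hc'

lemma one_le_supRatio (htx : x.trace = 1) (htv : v.trace = 1) : 1 ≤ supRatio x v := by
  refine le_sInf ?_
  rintro _ ⟨c, -, rfl, hc⟩
  have := hc.trace_nonneg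
  rw [trace_sub, trace_smul, htx, htv, Complex.real_smul, mul_one, sub_nonneg] at this
  exact ENNReal.one_le_ofReal.mpr (by exact_mod_cast this)

lemma infRatio_le_one (htx : x.trace = 1) (htv : v.trace = 1) : infRatio x v ≤ 1 := by
  refine sSup_le ?_
  rintro _ ⟨c, -, rfl, hc⟩
  have := hc.trace_nonneg
  rw [trace_sub, trace_smul, htx, htv, Complex.real_smul, mul_one, sub_nonneg] at this
  exact ENNReal.ofReal_le_one.mpr (by exact_mod_cast this)

lemma supRatio_le_and_le_infRatio_of_dH_le (htx : x.trace = 1) (htv : v.trace = 1) {η : ℝ}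
    (hd : dH x v ≤ η) :
    supRatio x v ≤ ENNReal.ofReal (Real.exp η) ∧
      ENNReal.ofReal (Real.exp (-η)) ≤ infRatio x v := by
  have hlog : (η : EReal) = ENNReal.log (ENNReal.ofReal (Real.exp η)) := by
    rw [ENNReal.log_ofReal_of_pos (Real.exp_pos η), Real.log_exp]
  rw [dH, hlog, ENNReal.log_le_log_iff] at hd
  rw [Real.exp_neg, ENNReal.ofReal_inv_of_pos (Real.exp_pos η)]
  exact ENNReal.le_and_inv_le_of_div_le (by simp [Real.exp_pos]) ENNReal.ofReal_ne_top
    (one_le_supRatio htx htv) (infRatio_le_one htx htv) hd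

end HilbertMetric

namespace Matrix

variable {n : Type*} [Fintype n] [DecidableEq n]

lemma IsHermitian.trace_cfc {𝕜 : Type*} [RCLike 𝕜] {A : Matrix n n 𝕜} (hA : A.IsHermitian)
    (f : ℝ → ℝ) : (cfc f A).trace = ∑ i, (f (hA.eigenvalues i) : 𝕜) := by
  rw [hA.cfc_eq, IsHermitian.cfc, Unitary.conjStarAlgAut_apply, trace_mul_cycle,
    Unitary.coe_star_mul_self, one_mul, trace_diagonal]
  rfl

lemma traceNorm_eq_re_trace_cfc_sqrt (A : Matrix n n ℂ) :
    traceNorm A = (cfc Real.sqrt (Aᴴ * A)).trace.re := by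
  rw [(posSemidef_conjTranspose_mul_self A).1.cfc_eq]
  rfl

lemma IsHermitian.traceNorm_eq {A : Matrix n n ℂ} (hA : A.IsHermitian) :
    traceNorm A = ∑ i, |hA.eigenvalues i| := by
  have habs : cfc Real.sqrt (Aᴴ * A) = cfc (fun t : ℝ => |t|) A := by
    rw [hA.eq, ← sq, ← cfc_comp_pow Real.sqrt 2 A]
    exact cfc_congr fun t _ => Real.sqrt_sq_eq_abs t
  rw [traceNorm_eq_re_trace_cfc_sqrt, habs, hA.trace_cfc, Complex.re_sum]
  simp

lemma IsHermitian.sum_abs_eigenvalues_le {A B : Matrix n n ℂ} (hA : A.IsHermitian)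
    (h₁ : (B - A).PosSemidef) (h₂ : (B + A).PosSemidef) :
    ∑ i, |hA.eigenvalues i| ≤ B.trace.re := by
  set U : Matrix n n ℂ := ↑hA.eigenvectorUnitary
  have hdiag : star U * A * U = diagonal (Complex.ofReal ∘ hA.eigenvalues) := by
    simpa [Unitary.conjStarAlgAut_apply] using hA.conjStarAlgAut_star_eigenvectorUnitary
  have hconj : ∀ M : Matrix n n ℂ, M.PosSemidef → ∀ i, 0 ≤ ((star U * M * U) i i).re :=
    fun M hM i => (Complex.nonneg_iff.mp (hM.conjTranspose_mul_mul_same U).diag_nonneg).1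
  have key : ∀ i, |hA.eigenvalues i| ≤ ((star U * B * U) i i).re := by
    intro i
    have h₁' := hconj _ h₁ i
    have h₂' := hconj _ h₂ i
    simp only [Matrix.mul_sub, Matrix.sub_mul, Matrix.mul_add, Matrix.add_mul, hdiag, sub_apply,
      add_apply, diagonal_apply_eq, Function.comp_apply, Complex.sub_re, Complex.add_re,
      Complex.ofReal_re] at h₁' h₂'
    exact abs_le.mpr ⟨by linarith, by linarith⟩
  calc ∑ i, |hA.eigenvalues i| ≤ ∑ i, ((star U * B * U) i i).re :=
        Finset.sum_le_sum fun i _ => key i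
    _ = B.trace.re := by
      rw [← Complex.re_sum]
      change (star U * B * U).trace.re = _
      rw [trace_mul_cycle, Unitary.mul_star_self_of_mem hA.eigenvectorUnitary.2, one_mul]

end Matrix

theorem stmt15_general (n : ℕ) (x v : Matrix (Fin n) (Fin n) ℂ)
    (hv : v.PosDef) (htx : x.trace = 1) (htv : v.trace = 1)
    (η : ℝ) (hd : dH x v ≤ (η : EReal)) :
    (x - Real.exp (-η) • v).PosSemidef ∧
    (Real.exp η • v - x).PosSemidef ∧
    traceNorm (x - v) ≤ Real.exp η - 1 := by
  obtain ⟨hsup, hinf⟩ := supRatio_le_and_le_infRatio_of_dH_le htx htv hd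
  have hlower := posSemidef_sub_smul_of_le_infRatio hv.posSemidef (Real.exp_pos _) hinf
  have hupper := posSemidef_smul_sub_of_supRatio_le hv.posSemidef (Real.exp_pos η).le hsup
  refine ⟨hlower, hupper, ?_⟩
  set B := (Real.exp η - 1) • v
  have hB_sub : (B - (x - v)).PosSemidef := by
    rwa [show B - (x - v) = Real.exp η • v - x by module]
  have hB_add : (B + (x - v)).PosSemidef := by
    rw [show B + (x - v) = (x - Real.exp (-η) • v) + (Real.exp η + Real.exp (-η) - 2) • v by
      module]
    refine hlower.add (hv.posSemidef.smul ?_)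
    linarith [Real.add_one_le_exp η, Real.add_one_le_exp (-η)]
  have hA : (x - v).IsHermitian := by
    simpa [B] using (hv.1.smul (IsSelfAdjoint.all (Real.exp η - 1))).sub hB_sub.1
  calc traceNorm (x - v) = ∑ i, |hA.eigenvalues i| := hA.traceNorm_eq
    _ ≤ B.trace.re := hA.sum_abs_eigenvalues_le hB_sub hB_add
    _ = Real.exp η - 1 := by simp [B, trace_smul, htv, Complex.exp_ofReal_re]

/-- If `x`, `v` are positive definite with `Tr x = Tr v = 1` and
`d_H(x,v) ≤ η`, then `e^{-η} v ≤ x ≤ e^{η} v` in the Loewner order, and consequently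
`‖x - v‖₁ ≤ e^{η} - 1`. -/
theorem stmt15 (n : ℕ) (x v : Matrix (Fin n) (Fin n) ℂ)
    (hx : x.PosDef) (hv : v.PosDef) (htx : x.trace = 1) (htv : v.trace = 1)
    (η : ℝ) (hη : 0 ≤ η) (hd : dH x v ≤ (η : EReal)) :
    (x - Real.exp (-η) • v).PosSemidef ∧
    (Real.exp η • v - x).PosSemidef ∧
    traceNorm (x - v) ≤ Real.exp η - 1 :=
  stmt15_general n x v hv htx htv η hd
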